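/- arXiv:math/0101257 — 3 statements merged into one kernel-verified Lean document; each statement's English description precedes it below -/
import Mathlib

section
/- Let V : L²(π) → [0,∞] satisfy V(P_t f) ≤ V(f) for all t ≥ 0, and suppose the Liggett–Stroock inequality Var(f) ≤ C·D(f)^{1/p}·V(f)^{1/q} holds with 1/p + 1/q = 1, p > 1, for all f ∈ L²(π). Then Var(P_t f) ≤ C'·V(f)/t^{q−1} for all t > 0, for some constant C' depending only on C, p, q. -/
/-!
Along the semigroup, `u(s) = Var(P_s f)` satisfies `u' = -2 D(P_s f)`, and since `V` does not grow
along the semigroup the Liggett–Stroock inequality turns this into the differential inequality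
`u' ≤ -κ u^p` with `κ = 2 / (C V(f)^{1/q})^p`. Hence `u^{1-p}` grows at least like `(p-1) κ s`,
which, using `(p - 1)(q - 1) = 1`, is the bound `u(t) ≤ ((p-1) κ t)^{-(q-1)} = C' V(f) / t^{q-1}`.
-/

open Set

lemma monotoneOn_Icc_of_hasDerivAt_nonneg {f f' : ℝ → ℝ} {a b : ℝ}
    (hf : ∀ x ∈ Icc a b, HasDerivAt f (f' x) x) (hf' : ∀ x ∈ Icc a b, 0 ≤ f' x) :
    MonotoneOn f (Icc a b) :=
  monotoneOn_of_hasDerivWithinAt_nonneg (convex_Icc a b)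
    (fun x hx => (hf x hx).continuousAt.continuousWithinAt)
    (fun x hx => (hf x (interior_subset hx)).hasDerivWithinAt)
    (fun x hx => hf' x (interior_subset hx))

lemma antitoneOn_Icc_of_hasDerivAt_nonpos {f f' : ℝ → ℝ} {a b : ℝ}
    (hf : ∀ x ∈ Icc a b, HasDerivAt f (f' x) x) (hf' : ∀ x ∈ Icc a b, f' x ≤ 0) :
    AntitoneOn f (Icc a b) :=
  antitoneOn_of_hasDerivWithinAt_nonpos (convex_Icc a b)
    (fun x hx => (hf x hx).continuousAt.continuousWithinAt)
    (fun x hx => (hf x (interior_subset hx)).hasDerivWithinAt)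
    (fun x hx => hf' x (interior_subset hx))

/-- Comparison with the solution of `y' = -κ y^p`: the derivative of `u^{1-p}` is
`(p - 1) (-u') u^{-p} ≥ (p - 1) κ`. -/
lemma rpow_one_sub_add_le_of_hasDerivAt {u u' : ℝ → ℝ} {p κ a b : ℝ} (hp : 1 ≤ p) (hab : a ≤ b)
    (hu : ∀ s ∈ Icc a b, HasDerivAt u (u' s) s) (hpos : ∀ s ∈ Icc a b, 0 < u s)
    (hu' : ∀ s ∈ Icc a b, u' s ≤ -κ * u s ^ p) :
    u a ^ (1 - p) + (p - 1) * κ * (b - a) ≤ u b ^ (1 - p) := by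
  have hderiv : ∀ s ∈ Icc a b, HasDerivAt (fun s => u s ^ (1 - p) - (p - 1) * κ * s)
      (u' s * (1 - p) * u s ^ (1 - p - 1) - (p - 1) * κ) s := fun s hs =>
    ((hu s hs).rpow_const (Or.inl (hpos s hs).ne')).sub
      (by simpa using (hasDerivAt_id s).const_mul ((p - 1) * κ))
  have hmono := monotoneOn_Icc_of_hasDerivAt_nonneg hderiv fun s hs => by
    have hus := hpos s hs
    have hinv : u s ^ (1 - p - 1) * u s ^ p = 1 := by
      rw [← Real.rpow_add hus, show 1 - p - 1 + p = 0 by ring, Real.rpow_zero]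
    have hineq : κ * u s ^ p ≤ -u' s := by linarith [hu' s hs]
    have hκ : κ ≤ -u' s * u s ^ (1 - p - 1) :=
      calc κ = κ * u s ^ p * u s ^ (1 - p - 1) := by
            rw [mul_assoc, mul_comm (u s ^ p), hinv, mul_one]
        _ ≤ -u' s * u s ^ (1 - p - 1) := by gcongr
    linarith [mul_le_mul_of_nonneg_left hκ (sub_nonneg.2 hp)]
  have hends := hmono (left_mem_Icc.2 hab) (right_mem_Icc.2 hab) hab
  simp only at hends
  linarith

lemma le_rpow_neg_of_hasDerivAt {u u' : ℝ → ℝ} {p κ t : ℝ} (hp : 1 < p) (ht : 0 < t) (hκ : 0 < κ)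
    (hu : ∀ s ∈ Icc 0 t, HasDerivAt u (u' s) s) (hpos : ∀ s ∈ Icc 0 t, 0 < u s)
    (hu' : ∀ s ∈ Icc 0 t, u' s ≤ -κ * u s ^ p) :
    u t ≤ ((p - 1) * κ * t) ^ (-(p - 1)⁻¹) := by
  have hp1 : 0 < p - 1 := sub_pos.2 hp
  have hut := hpos t (right_mem_Icc.2 ht.le)
  have hgrowth : (p - 1) * κ * t ≤ u t ^ (1 - p) := by
    have := rpow_one_sub_add_le_of_hasDerivAt hp.le ht.le hu hpos hu'
    have := Real.rpow_nonneg (hpos 0 (left_mem_Icc.2 ht.le)).le (1 - p)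
    simp only [sub_zero] at *
    linarith
  calc u t = (u t ^ (1 - p)) ^ (-(p - 1)⁻¹) := by
        rw [← Real.rpow_mul hut.le, show (1 - p) * -(p - 1)⁻¹ = 1 by field_simp; ring, Real.rpow_one]
    _ ≤ ((p - 1) * κ * t) ^ (-(p - 1)⁻¹) :=
        Real.rpow_le_rpow_of_nonpos (by positivity) hgrowth (by simp [hp1.le])

lemma rpow_div_rpow_le_of_le_mul {x d a p : ℝ} (hx : 0 ≤ x) (hd : 0 ≤ d) (ha : 0 < a)
    (hp : 0 < p) (h : x ≤ d ^ (1 / p) * a) : x ^ p / a ^ p ≤ d :=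
  calc x ^ p / a ^ p = (x / a) ^ p := (Real.div_rpow hx ha.le p).symm
    _ ≤ (d ^ (1 / p)) ^ p := Real.rpow_le_rpow (div_nonneg hx ha.le) ((div_le_iff₀ ha).2 h) hp.le
    _ = d := by rw [← Real.rpow_mul hd, one_div_mul_cancel hp.ne', Real.rpow_one]

lemma rpow_div_le_of_le_mul_rpow_mul_rpow {x d w v C p q : ℝ} (hp : 0 < p) (hq : 0 < q)
    (hC : 0 < C) (hx : 0 ≤ x) (hd : 0 ≤ d) (hw : 0 ≤ w) (hv : 0 < v) (hwv : w ≤ v)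
    (h : x ≤ C * d ^ (1 / p) * w ^ (1 / q)) : x ^ p / (C * v ^ (1 / q)) ^ p ≤ d := by
  refine rpow_div_rpow_le_of_le_mul hx hd (by positivity) hp (h.trans ?_)
  calc C * d ^ (1 / p) * w ^ (1 / q) ≤ C * d ^ (1 / p) * v ^ (1 / q) := by
        have := Real.rpow_nonneg hd (1 / p)
        gcongr
    _ = d ^ (1 / p) * (C * v ^ (1 / q)) := by ring

lemma rpow_neg_sub_one_eq {p q C v t : ℝ} (hpq : p.HolderConjugate q) (hC : 0 < C) (hv : 0 < v)
    (ht : 0 < t) :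
    ((p - 1) * (2 / (C * v ^ (1 / q)) ^ p) * t) ^ (-(q - 1)) =
      C ^ q / (2 * (p - 1)) ^ (q - 1) * v / t ^ (q - 1) := by
  have hp1 := hpq.sub_one_pos
  have hq := hpq.symm.pos
  have hpow : ((C * v ^ (1 / q)) ^ p) ^ (q - 1) = C ^ q * v := by
    rw [← Real.rpow_mul (by positivity), show p * (q - 1) = q by linear_combination hpq.mul_eq_add,
      Real.mul_rpow hC.le (by positivity), ← Real.rpow_mul hv.le, one_div_mul_cancel hq.ne',
      Real.rpow_one]
  rw [Real.rpow_neg (by positivity), show (p - 1) * (2 / (C * v ^ (1 / q)) ^ p) * t =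
      2 * (p - 1) * t / (C * v ^ (1 / q)) ^ p by ring, Real.div_rpow (by positivity) (by positivity),
    Real.mul_rpow (by positivity) ht.le, hpow]
  field_simp

theorem stmt_2_general {α : Type*} (P : ℝ → α → α) (Var D V : α → ℝ)
    (C p q : ℝ) (hC : 0 < C) (hp : 1 < p) (hpq : 1 / p + 1 / q = 1)
    (hDnonneg : ∀ f, 0 ≤ D f) (hVnonneg : ∀ f, 0 ≤ V f)
    (hVmono : ∀ f, ∀ t, 0 ≤ t → V (P t f) ≤ V f)
    (hderiv : ∀ f, ∀ t, 0 ≤ t →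
      HasDerivAt (fun s => Var (P s f)) (-2 * D (P t f)) t)
    (hLS : ∀ f, Var f ≤ C * (D f) ^ (1 / p) * (V f) ^ (1 / q)) :
    ∃ C' : ℝ, 0 < C' ∧ ∀ f, ∀ t : ℝ, 0 < t →
      Var (P t f) ≤ C' * V f / t ^ (q - 1) := by
  have hconj : p.HolderConjugate q := Real.holderConjugate_iff.2 ⟨hp, by simpa using hpq⟩
  have hp1 := hconj.sub_one_pos
  have hq1 : q - 1 = (p - 1)⁻¹ :=
    eq_inv_of_mul_eq_one_left (by linear_combination hconj.sub_one_mul_conj)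
  refine ⟨C ^ q / (2 * (p - 1)) ^ (q - 1), by positivity, fun f t ht => ?_⟩
  by_cases hut : Var (P t f) ≤ 0
  · exact hut.trans (by have := hVnonneg f; positivity)
  push Not at hut
  have hVf : 0 < V f := by
    refine (hVnonneg f).lt_of_ne fun hV0 => hut.not_ge ?_
    have hVt : V (P t f) = 0 := le_antisymm (hV0 ▸ hVmono f t ht.le) (hVnonneg _)
    simpa [hVt, Real.zero_rpow (inv_ne_zero hconj.symm.pos.ne')] using hLS (P t f)
  have hu : ∀ s ∈ Icc 0 t, HasDerivAt (fun s => Var (P s f)) (-2 * D (P s f)) s :=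
    fun s hs => hderiv f s hs.1
  have hpos : ∀ s ∈ Icc 0 t, 0 < Var (P s f) := fun s hs =>
    hut.trans_le (antitoneOn_Icc_of_hasDerivAt_nonpos hu (fun s _ => by
      linarith [hDnonneg (P s f)]) hs (right_mem_Icc.2 ht.le) hs.2)
  have hdiff : ∀ s ∈ Icc 0 t,
      -2 * D (P s f) ≤ -(2 / (C * V f ^ (1 / q)) ^ p) * Var (P s f) ^ p := fun s hs => by
    have := rpow_div_le_of_le_mul_rpow_mul_rpow hconj.pos hconj.symm.pos hC (hpos s hs).le
      (hDnonneg _) (hVnonneg _) hVf (hVmono f s hs.1) (hLS _)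
    rw [neg_mul, neg_mul, div_mul_eq_mul_div, mul_div_assoc]
    linarith
  calc Var (P t f) ≤ ((p - 1) * (2 / (C * V f ^ (1 / q)) ^ p) * t) ^ (-(q - 1)) := by
        rw [hq1]
        exact le_rpow_neg_of_hasDerivAt hp ht (by positivity) hu hpos hdiff
    _ = C ^ q / (2 * (p - 1)) ^ (q - 1) * V f / t ^ (q - 1) :=
        rpow_neg_sub_one_eq hconj hC hVf ht

theorem stmt_2 {α : Type*} (P : ℝ → α → α) (Var D V : α → ℝ)
    (C p q : ℝ) (hC : 0 < C) (hp : 1 < p) (hpq : 1 / p + 1 / q = 1)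
    (hDnonneg : ∀ f, 0 ≤ D f) (hVnonneg : ∀ f, 0 ≤ V f)
    (hVarnonneg : ∀ f, 0 ≤ Var f)
    (hVmono : ∀ f, ∀ t, 0 ≤ t → V (P t f) ≤ V f)
    (hsemigroup : ∀ s t, 0 ≤ s → 0 ≤ t → ∀ f, P (s + t) f = P s (P t f))
    (hP0 : ∀ f, P 0 f = f)
    (hderiv : ∀ f, ∀ t, 0 ≤ t →
      HasDerivAt (fun s => Var (P s f)) (-2 * D (P t f)) t)
    (hLS : ∀ f, Var f ≤ C * (D f) ^ (1 / p) * (V f) ^ (1 / q)) :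
    ∃ C' : ℝ, 0 < C' ∧ ∀ f, ∀ t : ℝ, 0 < t →
      Var (P t f) ≤ C' * V f / t ^ (q - 1) :=
  stmt_2_general P Var D V C p q hC hp hpq hDnonneg hVnonneg hVmono hderiv hLS
end

section
/- For a reversible Markov chain with bounded jump rates (M = sup_x q(x) < ∞), the spectral gap λ₁ := inf{D(f) : π(f)=0, ‖f‖₂=1} satisfies λ₁ ≥ k²/(2M), where k = inf over sets A with π(A) ∈ (0,1) of [∫_A π(dx) q(x,Aᶜ)] / [π(A) ∧ π(Aᶜ)]. -/
open Finset

/-!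
Split `f` at a median `c` into `(f - c)⁺` and `(f - c)⁻`: both are nonnegative and supported on
sets of mass at most `1/2`, their Dirichlet forms add up to at most that of `f`, and their second
moments add up to `π((f - c)²) = 1 + c² ≥ 1`. For such a `u ≥ 0`, peeling off level sets turns the
isoperimetric inequality into the `L¹` bound `2k π(v) ≤ ∑ J_ij |v_j - v_i|` for `v = u²`, and
Cauchy–Schwarz together with `∑ J_ij (u_i + u_j)² ≤ 4M π(u²)` upgrades it to `k² π(u²) ≤ 2M D(u)`.
-/

theorem abs_sub_eq_abs_min_sub_min_add_abs_posPart_sub (x y a : ℝ) :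
    |x - y| = |min x a - min y a| + |(x - a)⁺ - (y - a)⁺| := by
  simp only [posPart_def, abs_eq_max_neg, min_def, max_def]
  split_ifs <;> linarith

theorem min_add_posPart_sub (x a : ℝ) : min x a + (x - a)⁺ = x := by
  simp only [posPart_def, min_def, max_def]
  split_ifs <;> linarith

theorem sq_posPart_sub_add_sq_negPart_sub_le (x y : ℝ) :
    (x⁺ - y⁺) ^ 2 + (x⁻ - y⁻) ^ 2 ≤ (x - y) ^ 2 := by
  simp only [posPart_def, negPart_def, max_def]
  split_ifs <;> nlinarith

theorem sq_posPart_add_sq_negPart (x : ℝ) : x⁺ ^ 2 + x⁻ ^ 2 = x ^ 2 := by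
  simp only [posPart_def, negPart_def, max_def]
  split_ifs <;> nlinarith

section ReversibleChain

variable {E : Type*} [Fintype E] {π : E → ℝ} {J : E → E → ℝ}

theorem exists_median [Nonempty E] (hπ : ∀ i, 0 ≤ π i) (f : E → ℝ) :
    ∃ c, ∑ i with c < f i, π i ≤ (∑ i, π i) / 2 ∧ ∑ i with f i < c, π i ≤ (∑ i, π i) / 2 := by
  have hmass : 0 ≤ ∑ i, π i := sum_nonneg fun i _ => hπ i
  -- `c` is the least value of `f` at which the distribution function of `f` reaches half the mass
  set S : Finset E := {i | (∑ i, π i) / 2 ≤ ∑ j with f j ≤ f i, π j}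
  have hS : S.Nonempty := by
    obtain ⟨i, -, hi⟩ := exists_max_image univ f univ_nonempty
    refine ⟨i, mem_filter.2 ⟨mem_univ _, ?_⟩⟩
    rw [filter_true_of_mem fun j _ => hi j (mem_univ j)]
    linarith
  obtain ⟨i₀, hi₀, hmin⟩ := S.exists_min_image f hS
  refine ⟨f i₀, ?_, ?_⟩
  · have := sum_filter_add_sum_filter_not univ (fun j => f j ≤ f i₀) π
    simp only [not_le] at this
    linarith [(mem_filter.1 hi₀).2]
  · by_contra! hlt
    have hne : ({i | f i < f i₀} : Finset E).Nonempty := by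
      by_contra! h
      rw [h, sum_empty] at hlt
      linarith
    obtain ⟨j, hj, hmax⟩ := exists_max_image _ f hne
    have hjS : j ∈ S := mem_filter.2 ⟨mem_univ _, hlt.le.trans <|
      sum_le_sum_of_subset_of_nonneg (fun i hi => mem_filter.2 ⟨mem_univ _, hmax i hi⟩)
        fun i _ _ => hπ i⟩
    exact (hmin j hjS).not_gt (mem_filter.1 hj).2

theorem sq_sum_sum_mul_abs_sq_sub_sq_le (hJ : ∀ i j, 0 ≤ J i j) (u : E → ℝ) :
    (∑ i, ∑ j, J i j * |u j ^ 2 - u i ^ 2|) ^ 2 ≤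
      (∑ i, ∑ j, J i j * (u j - u i) ^ 2) * ∑ i, ∑ j, J i j * (u j + u i) ^ 2 := by
  simp only [← Fintype.sum_prod_type']
  refine sum_sq_le_sum_mul_sum_of_sq_le_mul _ (fun p _ => mul_nonneg (hJ _ _) (sq_nonneg _))
    (fun p _ => mul_nonneg (hJ _ _) (sq_nonneg _)) fun p _ => le_of_eq ?_
  rw [sq_sub_sq, abs_mul, mul_pow, mul_pow, sq_abs, sq_abs]
  ring

theorem sum_sum_mul_add_sq_le {M : ℝ} (hJ : ∀ i j, 0 ≤ J i j) (hJsymm : ∀ i j, J i j = J j i)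
    (hrow : ∀ i, ∑ j, J i j ≤ M * π i) (u : E → ℝ) :
    ∑ i, ∑ j, J i j * (u j + u i) ^ 2 ≤ 4 * M * ∑ i, π i * u i ^ 2 := by
  have hrows : ∑ i, ∑ j, J i j * u i ^ 2 ≤ M * ∑ i, π i * u i ^ 2 := by
    rw [mul_sum]
    refine sum_le_sum fun i _ => ?_
    rw [← sum_mul, ← mul_assoc]
    exact mul_le_mul_of_nonneg_right (hrow i) (sq_nonneg _)
  have hswap : ∑ i, ∑ j, J i j * u j ^ 2 = ∑ i, ∑ j, J i j * u i ^ 2 := by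
    rw [sum_comm]
    exact sum_congr rfl fun i _ => sum_congr rfl fun j _ => by rw [hJsymm]
  calc ∑ i, ∑ j, J i j * (u j + u i) ^ 2
      ≤ ∑ i, ∑ j, (2 * (J i j * u j ^ 2) + 2 * (J i j * u i ^ 2)) :=
        sum_le_sum fun i _ => sum_le_sum fun j _ => by
          nlinarith [mul_nonneg (hJ i j) (sq_nonneg (u j - u i))]
    _ = 4 * ∑ i, ∑ j, J i j * u i ^ 2 := by
        simp only [sum_add_distrib, ← mul_sum, hswap]
        ring
    _ ≤ 4 * M * ∑ i, π i * u i ^ 2 := by linarith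

noncomputable def dirichletForm (J : E → E → ℝ) (f : E → ℝ) : ℝ :=
  1 / 2 * ∑ i, ∑ j, J i j * (f j - f i) ^ 2

theorem dirichletForm_nonneg (hJ : ∀ i j, 0 ≤ J i j) (f : E → ℝ) : 0 ≤ dirichletForm J f :=
  mul_nonneg (by norm_num) <|
    sum_nonneg fun i _ => sum_nonneg fun j _ => mul_nonneg (hJ i j) (sq_nonneg _)

theorem dirichletForm_posPart_add_negPart_le (hJ : ∀ i j, 0 ≤ J i j) (f : E → ℝ) (c : ℝ) :
    dirichletForm J (fun i => (f i - c)⁺) + dirichletForm J (fun i => (f i - c)⁻) ≤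
      dirichletForm J f := by
  simp only [dirichletForm, ← mul_add, ← sum_add_distrib]
  refine mul_le_mul_of_nonneg_left (sum_le_sum fun i _ => sum_le_sum fun j _ => ?_) (by norm_num)
  refine mul_le_mul_of_nonneg_left ?_ (hJ i j)
  exact (sq_posPart_sub_add_sq_negPart_sub_le (f j - c) (f i - c)).trans_eq (by ring)

noncomputable def spectralGap (π : E → ℝ) (J : E → E → ℝ) : ℝ :=
  sInf {x : ℝ | ∃ f : E → ℝ,
    (∑ i, π i * f i) = 0 ∧ (∑ i, π i * f i ^ 2) = 1 ∧ x = dirichletForm J f}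

theorem spectralGap_nonneg (hJ : ∀ i j, 0 ≤ J i j) : 0 ≤ spectralGap π J :=
  Real.sInf_nonneg <| by
    rintro _ ⟨f, -, -, rfl⟩
    exact dirichletForm_nonneg hJ f

theorem exists_mean_zero_sq_mean_one_of_ne (hπ : ∀ i, 0 < π i) (hπ1 : ∑ i, π i = 1)
    (g : E → ℝ) {i j : E} (hij : g i ≠ g j) :
    ∃ f : E → ℝ, ∑ i, π i * f i = 0 ∧ ∑ i, π i * f i ^ 2 = 1 := by
  set m := ∑ i, π i * g i
  set V := ∑ i, π i * (g i - m) ^ 2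
  have hV : 0 < V := by
    have hterm : ∀ l ∈ univ, 0 ≤ π l * (g l - m) ^ 2 := fun l _ =>
      mul_nonneg (hπ l).le (sq_nonneg _)
    refine (sum_nonneg hterm).lt_of_ne fun hV0 => hij ?_
    have hconst : ∀ l, g l = m := fun l => by
      simpa [(hπ l).ne', sub_eq_zero] using (sum_eq_zero_iff_of_nonneg hterm).1 hV0.symm l
    rw [hconst i, hconst j]
  refine ⟨fun l => (g l - m) / √V, ?_, ?_⟩
  · simp only [mul_div_assoc', ← sum_div, mul_sub, sum_sub_distrib, ← sum_mul, hπ1]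
    simp [m]
  · simp only [div_pow, Real.sq_sqrt hV.le, mul_div_assoc', ← sum_div]
    exact div_self hV.ne'

variable [DecidableEq E]

def IsoperimetricBound (π : E → ℝ) (J : E → E → ℝ) (k : ℝ) : Prop :=
  ∀ A : Finset E, ∑ i ∈ A, π i ≤ 1 / 2 → k * ∑ i ∈ A, π i ≤ ∑ i ∈ A, ∑ j ∈ Aᶜ, J i j

theorem sum_sum_mul_abs_indicator_sub (hJsymm : ∀ i j, J i j = J j i) (A : Finset E) :
    ∑ i, ∑ j, J i j * |(if j ∈ A then 1 else 0) - (if i ∈ A then 1 else 0 : ℝ)| =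
      2 * ∑ i ∈ A, ∑ j ∈ Aᶜ, J i j := by
  have hin : ∀ i ∈ A, ∑ j, J i j * |(if j ∈ A then 1 else 0) - (if i ∈ A then 1 else 0 : ℝ)| =
      ∑ j ∈ Aᶜ, J i j := by
    intro i hi
    rw [← sum_add_sum_compl A, sum_eq_zero fun j hj => by simp [hi, hj], zero_add]
    exact sum_congr rfl fun j hj => by simp [hi, mem_compl.1 hj]
  have hout : ∀ i ∈ Aᶜ, ∑ j, J i j * |(if j ∈ A then 1 else 0) - (if i ∈ A then 1 else 0 : ℝ)| =
      ∑ j ∈ A, J i j := by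
    intro i hi
    rw [← sum_add_sum_compl A,
      sum_eq_zero (s := Aᶜ) fun j hj => by simp [mem_compl.1 hi, mem_compl.1 hj], add_zero]
    exact sum_congr rfl fun j hj => by simp [mem_compl.1 hi, hj]
  have hback : ∑ i ∈ Aᶜ, ∑ j ∈ A, J i j = ∑ i ∈ A, ∑ j ∈ Aᶜ, J i j :=
    sum_comm.trans <| sum_congr rfl fun i _ => sum_congr rfl fun j _ => hJsymm j i
  rw [← sum_add_sum_compl A, sum_congr rfl hin, sum_congr rfl hout, hback, two_mul]

theorem IsoperimetricBound.two_mul_sum_mul_le_sum_sum_mul_abs_sub {k : ℝ}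
    (hiso : IsoperimetricBound π J k) (hπ : ∀ i, 0 ≤ π i) (hJsymm : ∀ i j, J i j = J j i)
    (v : E → ℝ) (hv : ∀ i, 0 ≤ v i) (hsupp : ∑ i with 0 < v i, π i ≤ 1 / 2) :
    2 * k * ∑ i, π i * v i ≤ ∑ i, ∑ j, J i j * |v j - v i| := by
  induction h : #{i | 0 < v i} using Nat.strong_induction_on generalizing v with
  | _ n ih =>
  set A : Finset E := {i | 0 < v i}
  have hvA : ∀ i ∉ A, v i = 0 := fun i hi =>
    le_antisymm (not_lt.1 fun h => hi (mem_filter.2 ⟨mem_univ _, h⟩)) (hv i)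
  rcases A.eq_empty_or_nonempty with hAe | hAne
  · simp [hvA, hAe]
  -- peel off the lowest layer, `v = a • 1_A + (v - a)⁺` with `a` the least positive value of `v`;
  -- the two summands are comonotone, so both sides of the inequality split accordingly
  obtain ⟨i₀, hi₀, hmin⟩ := A.exists_min_image v hAne
  set a := v i₀
  have ha : 0 < a := (mem_filter.1 hi₀).2
  have hlevel : ∀ i, min (v i) a = a * if i ∈ A then 1 else 0 := by
    intro i
    by_cases hi : i ∈ A
    · simp [hi, hmin i hi]
    · simp [hi, hvA i hi, ha.le]
  set w : E → ℝ := fun i => (v i - a)⁺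
  have hwA : ({i | 0 < w i} : Finset E) ⊂ A := by
    refine ssubset_iff_of_subset (fun i hi => ?_) |>.2 ⟨i₀, hi₀, by simp [w, a]⟩
    have hi : 0 < v i - a := posPart_pos_iff.1 (mem_filter.1 hi).2
    exact mem_filter.2 ⟨mem_univ _, by linarith⟩
  have hw := ih _ (h ▸ card_lt_card hwA) w (fun i => posPart_nonneg _)
    ((sum_le_sum_of_subset_of_nonneg hwA.subset fun i _ _ => hπ i).trans hsupp) rfl
  have hmass : ∑ i, π i * v i = a * ∑ i ∈ A, π i + ∑ i, π i * w i := by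
    have hv : ∀ i, v i = (a * if i ∈ A then 1 else 0) + w i := fun i => by
      rw [← hlevel, min_add_posPart_sub]
    simp [hv, mul_add, sum_add_distrib, mul_sum, mul_comm]
  have hvar : ∑ i, ∑ j, J i j * |v j - v i| =
      2 * a * ∑ i ∈ A, ∑ j ∈ Aᶜ, J i j + ∑ i, ∑ j, J i j * |w j - w i| := by
    have hv : ∀ i j, |v j - v i| =
        a * |(if j ∈ A then 1 else 0) - (if i ∈ A then 1 else 0 : ℝ)| + |w j - w i| := by
      intro i j
      rw [abs_sub_eq_abs_min_sub_min_add_abs_posPart_sub _ _ a, hlevel, hlevel, ← mul_sub,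
        abs_mul, abs_of_pos ha]
    simp only [hv, mul_add, sum_add_distrib, mul_left_comm _ a, ← mul_sum,
      sum_sum_mul_abs_indicator_sub hJsymm, mul_assoc]
  rw [hmass, hvar]
  nlinarith [hiso A hsupp]

theorem IsoperimetricBound.sq_mul_sum_mul_sq_le {k M : ℝ} (hiso : IsoperimetricBound π J k)
    (hπ : ∀ i, 0 ≤ π i) (hJ : ∀ i j, 0 ≤ J i j) (hJsymm : ∀ i j, J i j = J j i)
    (hrow : ∀ i, ∑ j, J i j ≤ M * π i) (hM : 0 ≤ M) (hk : 0 ≤ k)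
    (u : E → ℝ) (hu : ∀ i, 0 ≤ u i) (hsupp : ∑ i with 0 < u i, π i ≤ 1 / 2) :
    k ^ 2 * ∑ i, π i * u i ^ 2 ≤ 2 * M * dirichletForm J u := by
  have hsupp_sq : ∑ i with 0 < u i ^ 2, π i ≤ 1 / 2 := by
    rwa [filter_congr fun i _ =>
      show 0 < u i ^ 2 ↔ 0 < u i by rw [sq_pos_iff, (hu i).lt_iff_ne']]
  have hL1 := hiso.two_mul_sum_mul_le_sum_sum_mul_abs_sub hπ hJsymm (fun i => u i ^ 2)
    (fun i => sq_nonneg _) hsupp_sq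
  have hCS := sq_sum_sum_mul_abs_sq_sub_sq_le hJ u
  have hadd := sum_sum_mul_add_sq_le hJ hJsymm hrow u
  set P := ∑ i, π i * u i ^ 2
  set D := ∑ i, ∑ j, J i j * (u j - u i) ^ 2
  have hP : 0 ≤ P := sum_nonneg fun i _ => mul_nonneg (hπ i) (sq_nonneg _)
  have hD : 0 ≤ D := sum_nonneg fun i _ => sum_nonneg fun j _ => mul_nonneg (hJ i j) (sq_nonneg _)
  have hsq : (2 * k * P) ^ 2 ≤ D * (4 * M * P) :=
    (pow_le_pow_left₀ (by positivity) hL1 2).trans (hCS.trans (mul_le_mul_of_nonneg_left hadd hD))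
  rw [dirichletForm]
  rcases hP.eq_or_lt with hP0 | hPpos
  · rw [← hP0]
    nlinarith
  · nlinarith

theorem IsoperimetricBound.sq_le_two_mul_mul_dirichletForm [Nonempty E] {k M : ℝ}
    (hiso : IsoperimetricBound π J k) (hπ : ∀ i, 0 ≤ π i) (hπ1 : ∑ i, π i = 1)
    (hJ : ∀ i j, 0 ≤ J i j) (hJsymm : ∀ i j, J i j = J j i) (hrow : ∀ i, ∑ j, J i j ≤ M * π i)
    (hM : 0 ≤ M) (hk : 0 ≤ k) (f : E → ℝ) (hf0 : ∑ i, π i * f i = 0)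
    (hf2 : ∑ i, π i * f i ^ 2 = 1) :
    k ^ 2 ≤ 2 * M * dirichletForm J f := by
  obtain ⟨c, habove, hbelow⟩ := exists_median hπ f
  rw [hπ1] at habove hbelow
  have hpos := hiso.sq_mul_sum_mul_sq_le hπ hJ hJsymm hrow hM hk (fun i => (f i - c)⁺)
    (fun i => posPart_nonneg _) (by simpa only [posPart_pos_iff, sub_pos] using habove)
  have hneg := hiso.sq_mul_sum_mul_sq_le hπ hJ hJsymm hrow hM hk (fun i => (f i - c)⁻)
    (fun i => negPart_nonneg _) (by simpa only [negPart_pos_iff, sub_neg] using hbelow)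
  have hsplit := dirichletForm_posPart_add_negPart_le hJ f c
  have hmass : 1 ≤ ∑ i, π i * (f i - c)⁺ ^ 2 + ∑ i, π i * (f i - c)⁻ ^ 2 := by
    have : ∑ i, π i * (f i - c)⁺ ^ 2 + ∑ i, π i * (f i - c)⁻ ^ 2 =
        ∑ i, π i * f i ^ 2 - 2 * c * ∑ i, π i * f i + c ^ 2 * ∑ i, π i := by
      simp only [← sum_add_distrib, ← mul_add, sq_posPart_add_sq_negPart, mul_sum,
        ← sum_sub_distrib]
      exact sum_congr rfl fun i _ => by ring
    rw [this, hf0, hf2, hπ1]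
    nlinarith [sq_nonneg c]
  calc k ^ 2
      ≤ k ^ 2 * (∑ i, π i * (f i - c)⁺ ^ 2 + ∑ i, π i * (f i - c)⁻ ^ 2) :=
        le_mul_of_one_le_right (sq_nonneg k) hmass
    _ ≤ 2 * M * dirichletForm J (fun i => (f i - c)⁺) +
          2 * M * dirichletForm J (fun i => (f i - c)⁻) := by
        rw [mul_add]
        exact add_le_add hpos hneg
    _ ≤ 2 * M * dirichletForm J f := by
        rw [← mul_add]
        exact mul_le_mul_of_nonneg_left hsplit (by positivity)

noncomputable def cheegerRatio (π : E → ℝ) (J : E → E → ℝ) (A : Finset E) : ℝ :=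
  (∑ i ∈ A, ∑ j ∈ Aᶜ, J i j) / min (∑ i ∈ A, π i) (∑ i ∈ Aᶜ, π i)

noncomputable def cheegerConstant (π : E → ℝ) (J : E → E → ℝ) : ℝ :=
  sInf {x : ℝ | ∃ A : Finset E,
    0 < ∑ i ∈ A, π i ∧ (∑ i ∈ A, π i) < 1 ∧ x = cheegerRatio π J A}

theorem cheegerRatio_nonneg (hπ : ∀ i, 0 ≤ π i) (hJ : ∀ i j, 0 ≤ J i j) (A : Finset E) :
    0 ≤ cheegerRatio π J A :=
  div_nonneg (sum_nonneg fun i _ => sum_nonneg fun j _ => hJ i j)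
    (le_min (sum_nonneg fun i _ => hπ i) (sum_nonneg fun i _ => hπ i))

theorem cheegerConstant_nonneg (hπ : ∀ i, 0 ≤ π i) (hJ : ∀ i j, 0 ≤ J i j) :
    0 ≤ cheegerConstant π J :=
  Real.sInf_nonneg <| by
    rintro _ ⟨A, -, -, rfl⟩
    exact cheegerRatio_nonneg hπ hJ A

theorem isoperimetricBound_cheegerConstant (hπ : ∀ i, 0 < π i) (hπ1 : ∑ i, π i = 1)
    (hJ : ∀ i j, 0 ≤ J i j) : IsoperimetricBound π J (cheegerConstant π J) := by
  intro A hA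
  rcases A.eq_empty_or_nonempty with rfl | hAne
  · simp
  have hpos : 0 < ∑ i ∈ A, π i := sum_pos (fun i _ => hπ i) hAne
  have hcompl : ∑ i ∈ Aᶜ, π i = 1 - ∑ i ∈ A, π i := by
    rw [← hπ1, ← sum_add_sum_compl A π, add_sub_cancel_left]
  have hle : cheegerConstant π J ≤ cheegerRatio π J A :=
    csInf_le ⟨0, by rintro _ ⟨B, -, -, rfl⟩; exact cheegerRatio_nonneg (fun i => (hπ i).le) hJ B⟩
      ⟨A, hpos, by linarith, rfl⟩
  rwa [cheegerRatio, hcompl, min_eq_left (by linarith), le_div_iff₀ hpos] at hle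

theorem exists_mean_zero_sq_mean_one_of_sum_pos_of_sum_lt_one (hπ : ∀ i, 0 < π i)
    (hπ1 : ∑ i, π i = 1) {A : Finset E} (hA0 : 0 < ∑ i ∈ A, π i) (hA1 : ∑ i ∈ A, π i < 1) :
    ∃ f : E → ℝ, ∑ i, π i * f i = 0 ∧ ∑ i, π i * f i ^ 2 = 1 := by
  obtain ⟨i, hi⟩ := nonempty_of_sum_ne_zero hA0.ne'
  obtain ⟨j, hj⟩ : ∃ j, j ∉ A := by
    by_contra! hA
    rw [eq_univ_of_forall hA, hπ1] at hA1
    exact lt_irrefl _ hA1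
  exact exists_mean_zero_sq_mean_one_of_ne hπ hπ1 (fun l => if l ∈ A then 1 else 0)
    (i := i) (j := j) (by simp [hi, hj])

theorem cheegerConstant_sq_div_le_spectralGap [Nonempty E] {M : ℝ} (hπ : ∀ i, 0 < π i)
    (hπ1 : ∑ i, π i = 1) (hJ : ∀ i j, 0 ≤ J i j) (hJsymm : ∀ i j, J i j = J j i)
    (hrow : ∀ i, ∑ j, J i j ≤ M * π i) (hM : 0 ≤ M) :
    cheegerConstant π J ^ 2 / (2 * M) ≤ spectralGap π J := by
  by_cases hA : ∃ A : Finset E, 0 < ∑ i ∈ A, π i ∧ ∑ i ∈ A, π i < 1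
  · obtain ⟨A, hA0, hA1⟩ := hA
    obtain ⟨f₀, hf₀⟩ := exists_mean_zero_sq_mean_one_of_sum_pos_of_sum_lt_one hπ hπ1 hA0 hA1
    refine le_csInf ⟨_, f₀, hf₀.1, hf₀.2, rfl⟩ ?_
    rintro _ ⟨f, hf0, hf2, rfl⟩
    refine div_le_of_le_mul₀ (by positivity) (dirichletForm_nonneg hJ f) ?_
    have := (isoperimetricBound_cheegerConstant hπ hπ1 hJ).sq_le_two_mul_mul_dirichletForm
      (fun i => (hπ i).le) hπ1 hJ hJsymm hrow hM (cheegerConstant_nonneg (fun i => (hπ i).le) hJ)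
      f hf0 hf2
    linarith
  · have hempty : cheegerConstant π J = 0 := by
      refine (congrArg sInf (Set.eq_empty_of_forall_notMem ?_)).trans Real.sInf_empty
      rintro _ ⟨A, hA0, hA1, -⟩
      exact hA ⟨A, hA0, hA1⟩
    rw [hempty, sq, zero_mul, zero_div]
    exact spectralGap_nonneg hJ

end ReversibleChain

theorem stmt_3_general {E : Type*} [Fintype E] [DecidableEq E] [Nonempty E]
    (π : E → ℝ) (hπpos : ∀ i, 0 < π i) (hπ1 : ∑ i, π i = 1)
    (q : E → E → ℝ) (hqnonneg : ∀ i j, 0 ≤ q i j)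
    (hrev : ∀ i j, π i * q i j = π j * q j i)
    (M : ℝ) (hM : ∀ i, ∑ j, q i j ≤ M)
    (k lam1 : ℝ)
    (hk : k = sInf {x : ℝ | ∃ A : Finset E,
      0 < ∑ i ∈ A, π i ∧ (∑ i ∈ A, π i) < 1 ∧
      x = (∑ i ∈ A, ∑ j ∈ Aᶜ, π i * q i j) /
        min (∑ i ∈ A, π i) (∑ i ∈ Aᶜ, π i)})
    (hlam1 : lam1 = sInf {x : ℝ | ∃ f : E → ℝ,
      (∑ i, π i * f i) = 0 ∧ (∑ i, π i * f i ^ 2) = 1 ∧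
      x = (1 / 2) * ∑ i, ∑ j, π i * q i j * (f j - f i) ^ 2}) :
    lam1 ≥ k ^ 2 / (2 * M) := by
  have hM_nonneg : 0 ≤ M := (sum_nonneg fun j _ => hqnonneg (Classical.arbitrary E) j).trans (hM _)
  have hrow : ∀ i, ∑ j, π i * q i j ≤ M * π i := fun i => by
    rw [← mul_sum, mul_comm M]
    exact mul_le_mul_of_nonneg_left (hM i) (hπpos i).le
  subst hk hlam1
  exact cheegerConstant_sq_div_le_spectralGap hπpos hπ1
    (fun i j => mul_nonneg (hπpos i).le (hqnonneg i j)) hrev hrow hM_nonneg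

theorem stmt_3 {E : Type*} [Fintype E] [DecidableEq E] [Nonempty E]
    (π : E → ℝ) (hπpos : ∀ i, 0 < π i) (hπ1 : ∑ i, π i = 1)
    (q : E → E → ℝ) (hqnonneg : ∀ i j, 0 ≤ q i j)
    (hrev : ∀ i j, π i * q i j = π j * q j i)
    (M : ℝ) (hM0 : 0 < M) (hM : ∀ i, ∑ j, q i j ≤ M)
    (k lam1 : ℝ)
    (hk : k = sInf {x : ℝ | ∃ A : Finset E,
      0 < ∑ i ∈ A, π i ∧ (∑ i ∈ A, π i) < 1 ∧
      x = (∑ i ∈ A, ∑ j ∈ Aᶜ, π i * q i j) /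
        min (∑ i ∈ A, π i) (∑ i ∈ Aᶜ, π i)})
    (hlam1 : lam1 = sInf {x : ℝ | ∃ f : E → ℝ,
      (∑ i, π i * f i) = 0 ∧ (∑ i, π i * f i ^ 2) = 1 ∧
      x = (1 / 2) * ∑ i, ∑ j, π i * q i j * (f j - f i) ^ 2}) :
    lam1 ≥ k ^ 2 / (2 * M) :=
  stmt_3_general π hπpos hπ1 q hqnonneg hrev M hM k lam1 hk hlam1
end

section
/- For the Neumann Laplacian f ↦ f'' on [0, D], the one-dimensional case of the Chen–Wang formula with C ≡ 1 and g ≡ 1 gives the lower bound λ₁ ≥ inf_{r∈(0,D)} 4/(∫₀^r (D − s) ds) = 8/D². -/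
open Set intervalIntegral MeasureTheory

/-- Cauchy–Schwarz for interval integrals of a continuous function. -/
lemma cs_lemma (a b : ℝ) (hab : a ≤ b) (g : ℝ → ℝ) (hg : ContinuousOn g (Icc a b)) :
    (∫ t in a..b, g t) ^ 2 ≤ (b - a) * ∫ t in a..b, g t ^ 2 := by
  set L := b - a with hL
  set I := ∫ t in a..b, g t with hI
  have hLnn : 0 ≤ L := by simp [hL, hab]
  have hgint : IntervalIntegrable g volume a b :=
    hg.intervalIntegrable_of_Icc hab
  have hg2int : IntervalIntegrable (fun t => g t ^ 2) volume a b :=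
    (hg.pow 2).intervalIntegrable_of_Icc hab
  have key : (0:ℝ) ≤ ∫ t in a..b, (L * g t - I) ^ 2 :=
    intervalIntegral.integral_nonneg hab (fun t _ => sq_nonneg _)
  have expand : (∫ t in a..b, (L * g t - I) ^ 2)
      = L ^ 2 * (∫ t in a..b, g t ^ 2) - 2 * L * I * I + I ^ 2 * L := by
    have : ∀ t, (L * g t - I) ^ 2 = L ^ 2 * g t ^ 2 - (2 * L * I) * g t + I ^ 2 := by
      intro t; ring
    simp_rw [this]
    rw [intervalIntegral.integral_add (((hg2int.const_mul _).sub (hgint.const_mul _)))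
        intervalIntegrable_const,
      intervalIntegral.integral_sub (hg2int.const_mul _) (hgint.const_mul _),
      intervalIntegral.integral_const_mul, intervalIntegral.integral_const_mul,
      intervalIntegral.integral_const]
    simp only [smul_eq_mul]
    ring
  rw [expand] at key
  rcases eq_or_lt_of_le hLnn with h0 | h0
  · have hb : b = a := by simp only [hL] at h0; linarith
    have hI0 : I = 0 := by rw [hI, hb, intervalIntegral.integral_same]
    simp [hI0, ← h0]
  · nlinarith [key]

/-- On [a,b], deviation from the right-endpoint value. -/
lemma half_right (a b : ℝ) (hab : a ≤ b) (f f' : ℝ → ℝ)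
    (hd : ∀ x ∈ Icc a b, HasDerivWithinAt f (f' x) (Icc a b) x)
    (hc : ContinuousOn f' (Icc a b)) :
    (∫ x in a..b, (f x - f b) ^ 2) ≤ (b - a) ^ 2 / 2 * ∫ x in a..b, f' x ^ 2 := by
  have hfc : ContinuousOn f (Icc a b) := fun x hx => (hd x hx).continuousWithinAt
  have hK : (0:ℝ) ≤ ∫ x in a..b, f' x ^ 2 :=
    intervalIntegral.integral_nonneg hab (fun t _ => sq_nonneg _)
  obtain ⟨K, hKdef⟩ : ∃ K, (∫ x in a..b, f' x ^ 2) = K := ⟨_, rfl⟩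
  rw [hKdef] at hK ⊢
  -- pointwise bound
  have pt : ∀ x ∈ Icc a b, (f x - f b) ^ 2 ≤ (b - x) * K := by
    intro x hx
    have hsub : Icc x b ⊆ Icc a b := Icc_subset_Icc hx.1 le_rfl
    have ftc : (∫ y in x..b, f' y) = f b - f x := by
      apply intervalIntegral.integral_eq_sub_of_hasDeriv_right_of_le hx.2
        (hfc.mono hsub)
      · intro y hy
        exact (hd y (hsub (Ioo_subset_Icc_self hy))).mono_of_mem_nhdsWithin
          (Filter.mem_of_superset (Icc_mem_nhdsGT_of_mem ⟨hy.1.le, hy.2⟩)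
            (fun z hz => hsub hz))
      · exact (hc.mono hsub).intervalIntegrable_of_Icc hx.2
    have cs : (∫ y in x..b, f' y) ^ 2 ≤ (b - x) * ∫ y in x..b, f' y ^ 2 :=
      cs_lemma x b hx.2 f' (hc.mono hsub)
    have mono : (∫ y in x..b, f' y ^ 2) ≤ K := by
      rw [← hKdef]
      apply intervalIntegral.integral_mono_interval hx.1 hx.2 le_rfl
      · filter_upwards with t using sq_nonneg _
      · exact (hc.pow 2).intervalIntegrable_of_Icc hab
    calc (f x - f b) ^ 2 = (∫ y in x..b, f' y) ^ 2 := by rw [ftc]; ring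
      _ ≤ (b - x) * ∫ y in x..b, f' y ^ 2 := cs
      _ ≤ (b - x) * K := by
          apply mul_le_mul_of_nonneg_left mono (by linarith [hx.2])
  -- integrate
  have hint1 : IntervalIntegrable (fun x => (f x - f b) ^ 2) volume a b :=
    ((hfc.sub continuousOn_const).pow 2).intervalIntegrable_of_Icc hab
  have hint2 : IntervalIntegrable (fun x => (b - x) * K) volume a b :=
    (Continuous.intervalIntegrable (by continuity) a b)
  have := intervalIntegral.integral_mono_on hab hint1 hint2 pt
  have comp : (∫ x in a..b, (b - x) * K) = (b - a) ^ 2 / 2 * K := by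
    rw [intervalIntegral.integral_mul_const]
    have : (∫ x in a..b, (b - x)) = (b - a) ^ 2 / 2 := by
      rw [intervalIntegral.integral_sub intervalIntegrable_const
        (Continuous.intervalIntegrable (by continuity) a b)]
      simp [integral_id]
      ring
    rw [this]
  rw [comp] at this
  exact this

/-- On [a,b], deviation from the left-endpoint value. -/
lemma half_left (a b : ℝ) (hab : a ≤ b) (f f' : ℝ → ℝ)
    (hd : ∀ x ∈ Icc a b, HasDerivWithinAt f (f' x) (Icc a b) x)
    (hc : ContinuousOn f' (Icc a b)) :
    (∫ x in a..b, (f x - f a) ^ 2) ≤ (b - a) ^ 2 / 2 * ∫ x in a..b, f' x ^ 2 := by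
  have hfc : ContinuousOn f (Icc a b) := fun x hx => (hd x hx).continuousWithinAt
  have hK : (0:ℝ) ≤ ∫ x in a..b, f' x ^ 2 :=
    intervalIntegral.integral_nonneg hab (fun t _ => sq_nonneg _)
  obtain ⟨K, hKdef⟩ : ∃ K, (∫ x in a..b, f' x ^ 2) = K := ⟨_, rfl⟩
  rw [hKdef] at hK ⊢
  have pt : ∀ x ∈ Icc a b, (f x - f a) ^ 2 ≤ (x - a) * K := by
    intro x hx
    have hsub : Icc a x ⊆ Icc a b := Icc_subset_Icc le_rfl hx.2
    have ftc : (∫ y in a..x, f' y) = f x - f a := by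
      apply intervalIntegral.integral_eq_sub_of_hasDeriv_right_of_le hx.1
        (hfc.mono hsub)
      · intro y hy
        exact (hd y (hsub (Ioo_subset_Icc_self hy))).mono_of_mem_nhdsWithin
          (Filter.mem_of_superset (Icc_mem_nhdsGT_of_mem ⟨hy.1.le, hy.2⟩)
            (fun z hz => ⟨hz.1, hz.2.trans hx.2⟩))
      · exact (hc.mono hsub).intervalIntegrable_of_Icc hx.1
    have cs : (∫ y in a..x, f' y) ^ 2 ≤ (x - a) * ∫ y in a..x, f' y ^ 2 :=
      cs_lemma a x hx.1 f' (hc.mono hsub)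
    have mono : (∫ y in a..x, f' y ^ 2) ≤ K := by
      rw [← hKdef]
      apply intervalIntegral.integral_mono_interval le_rfl hx.1 hx.2
      · filter_upwards with t using sq_nonneg _
      · exact (hc.pow 2).intervalIntegrable_of_Icc hab
    calc (f x - f a) ^ 2 = (∫ y in a..x, f' y) ^ 2 := by rw [ftc]
      _ ≤ (x - a) * ∫ y in a..x, f' y ^ 2 := cs
      _ ≤ (x - a) * K := by
          apply mul_le_mul_of_nonneg_left mono (by linarith [hx.1])
  have hint1 : IntervalIntegrable (fun x => (f x - f a) ^ 2) volume a b :=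
    ((hfc.sub continuousOn_const).pow 2).intervalIntegrable_of_Icc hab
  have hint2 : IntervalIntegrable (fun x => (x - a) * K) volume a b :=
    (Continuous.intervalIntegrable (by continuity) a b)
  have := intervalIntegral.integral_mono_on hab hint1 hint2 pt
  have comp : (∫ x in a..b, (x - a) * K) = (b - a) ^ 2 / 2 * K := by
    rw [intervalIntegral.integral_mul_const]
    have : (∫ x in a..b, (x - a)) = (b - a) ^ 2 / 2 := by
      rw [intervalIntegral.integral_sub
        (Continuous.intervalIntegrable (by continuity) a b) intervalIntegrable_const]
      simp [integral_id]
      ring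
    rw [this]
  rw [comp] at this
  exact this

theorem stmt_17 (D : ℝ) (hD : 0 < D) (f f' : ℝ → ℝ)
    (hderiv : ∀ x ∈ Set.Icc 0 D, HasDerivWithinAt f (f' x) (Set.Icc 0 D) x)
    (hcont : ContinuousOn f' (Set.Icc 0 D))
    (hmean : (∫ x in (0:ℝ)..D, f x) = 0) :
    (∫ x in (0:ℝ)..D, f x ^ 2) ≤ D ^ 2 / 8 * ∫ x in (0:ℝ)..D, f' x ^ 2 := by
  set m := D / 2 with hm
  have h0m : (0:ℝ) ≤ m := by positivity
  have hmD : m ≤ D := by simp [hm]; linarith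
  have hfc : ContinuousOn f (Icc 0 D) := fun x hx => (hderiv x hx).continuousWithinAt
  set a := f m with ha
  have hDle : (0:ℝ) ≤ D := hD.le
  have hfint : IntervalIntegrable f volume 0 D :=
    hfc.intervalIntegrable_of_Icc hDle
  have hf2int : IntervalIntegrable (fun x => f x ^ 2) volume 0 D :=
    (hfc.pow 2).intervalIntegrable_of_Icc hDle
  -- Step 1: ∫ f² ≤ ∫ (f - a)²
  have step1 : (∫ x in (0:ℝ)..D, f x ^ 2) ≤ ∫ x in (0:ℝ)..D, (f x - a) ^ 2 := by
    have expand : (∫ x in (0:ℝ)..D, (f x - a) ^ 2)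
        = (∫ x in (0:ℝ)..D, f x ^ 2) - 2 * a * (∫ x in (0:ℝ)..D, f x) + a ^ 2 * D := by
      have : ∀ x, (f x - a) ^ 2 = f x ^ 2 - (2 * a) * f x + a ^ 2 := by intro x; ring
      simp_rw [this]
      rw [intervalIntegral.integral_add (hf2int.sub (hfint.const_mul _)) intervalIntegrable_const,
        intervalIntegral.integral_sub hf2int (hfint.const_mul _),
        intervalIntegral.integral_const_mul, intervalIntegral.integral_const]
      simp only [smul_eq_mul]
      ring
    rw [expand, hmean]
    nlinarith [sq_nonneg a, hD]
  -- Step 2: split and apply the half lemmas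
  have subL : Icc (0:ℝ) m ⊆ Icc 0 D := Icc_subset_Icc le_rfl hmD
  have subR : Icc m D ⊆ Icc (0:ℝ) D := Icc_subset_Icc h0m le_rfl
  have hL := half_right 0 m h0m f f'
    (fun x hx => (hderiv x (subL hx)).mono subL) (hcont.mono subL)
  have hR := half_left m D hmD f f'
    (fun x hx => (hderiv x (subR hx)).mono subR) (hcont.mono subR)
  have hgint1 : IntervalIntegrable (fun x => (f x - a) ^ 2) volume 0 m :=
    (((hfc.mono subL).sub continuousOn_const).pow 2).intervalIntegrable_of_Icc h0m
  have hgint2 : IntervalIntegrable (fun x => (f x - a) ^ 2) volume m D :=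
    (((hfc.mono subR).sub continuousOn_const).pow 2).intervalIntegrable_of_Icc hmD
  have split : (∫ x in (0:ℝ)..D, (f x - a) ^ 2)
      = (∫ x in (0:ℝ)..m, (f x - a) ^ 2) + ∫ x in m..D, (f x - a) ^ 2 :=
    (intervalIntegral.integral_add_adjacent_intervals hgint1 hgint2).symm
  have hcint1 : IntervalIntegrable (fun x => f' x ^ 2) volume 0 m :=
    ((hcont.mono subL).pow 2).intervalIntegrable_of_Icc h0m
  have hcint2 : IntervalIntegrable (fun x => f' x ^ 2) volume m D :=
    ((hcont.mono subR).pow 2).intervalIntegrable_of_Icc hmD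
  have split' : (∫ x in (0:ℝ)..D, f' x ^ 2)
      = (∫ x in (0:ℝ)..m, f' x ^ 2) + ∫ x in m..D, f' x ^ 2 :=
    (intervalIntegral.integral_add_adjacent_intervals hcint1 hcint2).symm
  have e1 : (m - 0) ^ 2 / 2 = D ^ 2 / 8 := by rw [hm]; ring
  have e2 : (D - m) ^ 2 / 2 = D ^ 2 / 8 := by rw [hm]; ring
  rw [e1] at hL
  rw [e2] at hR
  calc (∫ x in (0:ℝ)..D, f x ^ 2) ≤ ∫ x in (0:ℝ)..D, (f x - a) ^ 2 := step1
    _ = (∫ x in (0:ℝ)..m, (f x - a) ^ 2) + ∫ x in m..D, (f x - a) ^ 2 := split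
    _ ≤ D ^ 2 / 8 * (∫ x in (0:ℝ)..m, f' x ^ 2) + D ^ 2 / 8 * ∫ x in m..D, f' x ^ 2 :=
        add_le_add hL hR
    _ = D ^ 2 / 8 * ∫ x in (0:ℝ)..D, f' x ^ 2 := by rw [split']; ring
end
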